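/- arXiv:2407.17923 — 3 statements merged into one kernel-verified Lean document; each statement's English description precedes it below -/
import Mathlib

section
/- For a Hilbert space V, 0 < γ < δ, and a weight μ : (0,∞) → [0,∞) that is continuous, integrable, and satisfies μ(s) ≤ μ(1)e^{-δ(s-1)} for s ≥ 1, the map J defined by (Jφ)(s) = ∫_{-s}^0 φ(r) dr is a bounded linear operator from the weighted space L²_V = {φ : (-∞,0] → V measurable : ∫_{-∞}^0 e^{γs} ‖φ(s)‖² ds < ∞} into L²_μ((0,∞); V) = {η : (0,∞) → V : ∫_0^∞ μ(s)‖η(s)‖² ds < ∞}. In particular there is a constant K_μ = e^{γ}∫_0^1 μ(s)ds + μ(1)e^{δ}(δ-γ)^{-2} such that ∫_0^∞ μ(s)‖(Jφ)(s)‖² ds ≤ K_μ ∫_{-∞}^0 e^{γs}‖φ(s)‖² ds. -/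
/-!
Cauchy–Schwarz against the weight `e^{γr}` gives, for `s > 0`,
`‖Jφ(s)‖² ≤ (∫_{-s}^0 e^{-γr} dr) · ∫_{-∞}^0 e^{γr}‖φ(r)‖² dr ≤ s e^{γs} ∫_{-∞}^0 e^{γr}‖φ(r)‖² dr`,
so it suffices that `∫_0^∞ μ(s) s e^{γs} ds ≤ K_μ`. On `(0, 1]` we use `s e^{γs} ≤ e^γ`; on `(1, ∞)`
the decay of `μ` bounds the integrand by `μ(1) e^δ s e^{-(δ-γ)s}`, whose integral is at most
`μ(1) e^δ (δ-γ)⁻²` by the Gamma integral. Measurability of `Jφ` comes from its continuity as a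
primitive.
-/

open Real MeasureTheory Set

section WeightedCauchySchwarz

variable {α E : Type*} [MeasurableSpace α] [NormedAddCommGroup E] {ν : Measure α}
  {w : α → ℝ} {f : α → E}

theorem integrable_of_integrable_mul_norm_sq [IsFiniteMeasure ν] {c : ℝ} (hc : 0 < c)
    (hw : ∀ᵐ x ∂ν, c ≤ w x) (hf : AEStronglyMeasurable f ν)
    (hwf : Integrable (fun x => w x * ‖f x‖ ^ 2) ν) : Integrable f ν := by
  refine ((memLp_two_iff_integrable_sq_norm hf).2 ?_).integrable one_le_two
  refine (hwf.const_mul c⁻¹).mono' (hf.norm.pow 2) ?_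
  filter_upwards [hw] with x hx
  rw [norm_of_nonneg (by positivity), le_inv_mul_iff₀ hc]
  gcongr

theorem sq_integral_norm_le_integral_inv_mul_integral_mul_norm_sq (hw : ∀ x, 0 < w x)
    (hwm : AEStronglyMeasurable w ν) (hf : AEStronglyMeasurable f ν)
    (hw_inv : Integrable (fun x => (w x)⁻¹) ν) (hwf : Integrable (fun x => w x * ‖f x‖ ^ 2) ν) :
    (∫ x, ‖f x‖ ∂ν) ^ 2 ≤ (∫ x, (w x)⁻¹ ∂ν) * ∫ x, w x * ‖f x‖ ^ 2 ∂ν := by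
  have hw_inv_nonneg : ∀ x, 0 ≤ (w x)⁻¹ := fun x => inv_nonneg.2 (hw x).le
  have hFG : ∀ x, √(w x)⁻¹ * (√(w x) * ‖f x‖) = ‖f x‖ := fun x => by
    rw [← mul_assoc, ← sqrt_mul (hw_inv_nonneg x), inv_mul_cancel₀ (hw x).ne', sqrt_one, one_mul]
  have hF_sq : ∀ x, √(w x)⁻¹ ^ (2 : ℝ) = (w x)⁻¹ := fun x => by
    rw [rpow_two, sq_sqrt (hw_inv_nonneg x)]
  have hG_sq : ∀ x, (√(w x) * ‖f x‖) ^ (2 : ℝ) = w x * ‖f x‖ ^ 2 := fun x => by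
    rw [rpow_two, mul_pow, sq_sqrt (hw x).le]
  have hF : MemLp (fun x => √(w x)⁻¹) (ENNReal.ofReal 2) ν := by
    rw [ENNReal.ofReal_ofNat]
    refine (memLp_two_iff_integrable_sq (f := fun x => √(w x)⁻¹)
      hwm.aemeasurable.inv.sqrt.aestronglyMeasurable).2 ?_
    simpa only [← rpow_two, hF_sq] using hw_inv
  have hG : MemLp (fun x => √(w x) * ‖f x‖) (ENNReal.ofReal 2) ν := by
    rw [ENNReal.ofReal_ofNat]
    refine (memLp_two_iff_integrable_sq (f := fun x => √(w x) * ‖f x‖)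
      (hwm.aemeasurable.sqrt.aestronglyMeasurable.mul hf.norm)).2 ?_
    simpa only [← rpow_two, hG_sq] using hwf
  have holder := integral_mul_le_Lp_mul_Lq_of_nonneg HolderConjugate.two_two
    (ae_of_all _ fun x => sqrt_nonneg _) (ae_of_all _ fun x => by positivity) hF hG
  simp only [hFG, hF_sq, hG_sq, ← sqrt_eq_rpow] at holder
  calc (∫ x, ‖f x‖ ∂ν) ^ 2 ≤ (√(∫ x, (w x)⁻¹ ∂ν) * √(∫ x, w x * ‖f x‖ ^ 2 ∂ν)) ^ 2 :=
        pow_le_pow_left₀ (integral_nonneg fun x => norm_nonneg _) holder 2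
    _ = _ := by
        rw [mul_pow, sq_sqrt (integral_nonneg hw_inv_nonneg),
          sq_sqrt (integral_nonneg fun x => mul_nonneg (hw x).le (sq_nonneg _))]

end WeightedCauchySchwarz

section IntegralOverIcc

variable {E : Type*} [NormedAddCommGroup E] [NormedSpace ℝ E]

theorem setIntegral_Icc_neg_eq_intervalIntegral_indicator (φ : ℝ → E) (s : ℝ) :
    ∫ r in Icc (-s) 0, φ r = ∫ r in (-s)..0, (Iic 0).indicator φ r := by
  rcases le_or_gt 0 s with hs | hs
  · rw [intervalIntegral.integral_of_le (by linarith), integral_Icc_eq_integral_Ioc,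
      setIntegral_indicator measurableSet_Iic, inter_eq_self_of_subset_left Ioc_subset_Iic_self]
  · rw [Icc_eq_empty (by linarith), intervalIntegral.integral_of_ge (by linarith),
      setIntegral_indicator measurableSet_Iic, Ioc_inter_Iic, min_eq_right (by linarith),
      Ioc_self]
    simp

theorem continuous_setIntegral_Icc_neg {φ : ℝ → E} (hφ : ∀ a, IntegrableOn φ (Icc a 0)) :
    Continuous fun s => ∫ r in Icc (-s) 0, φ r := by
  simp only [setIntegral_Icc_neg_eq_intervalIntegral_indicator]
  refine (intervalIntegral.continuous_primitive (fun a b => ?_) 0).comp continuous_neg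
    |>.neg.congr fun s => intervalIntegral.integral_symm _ _ |>.symm
  refine IntegrableOn.intervalIntegrable ?_
  rw [integrableOn_indicator_iff measurableSet_Iic]
  exact (hφ (min a b)).mono_set fun x hx => ⟨hx.2.1, hx.1⟩

theorem norm_setIntegral_Icc_neg_sq_le {φ : ℝ → E} {γ s : ℝ} (hγ : 0 ≤ γ) (hs : 0 ≤ s)
    (hφm : AEStronglyMeasurable φ (volume.restrict (Iic 0)))
    (hφ : IntegrableOn (fun r => exp (γ * r) * ‖φ r‖ ^ 2) (Iic 0)) :
    ‖∫ r in Icc (-s) 0, φ r‖ ^ 2 ≤ s * exp (γ * s) * ∫ r in Iic 0, exp (γ * r) * ‖φ r‖ ^ 2 := by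
  have hsub : Icc (-s) 0 ⊆ Iic 0 := Icc_subset_Iic_self
  have h_inv : ∫ r in Icc (-s) 0, (exp (γ * r))⁻¹ ≤ s * exp (γ * s) := by
    have : ‖∫ r in Icc (-s) 0, (exp (γ * r))⁻¹‖ ≤ exp (γ * s) * volume.real (Icc (-s) 0) :=
      norm_setIntegral_le_of_norm_le_const measure_Icc_lt_top fun r hr => by
        rw [norm_inv, norm_of_nonneg (exp_pos _).le, ← exp_neg, exp_le_exp]
        linarith [mul_le_mul_of_nonneg_left (neg_le.1 hr.1) hγ]
    rw [volume_real_Icc_of_le (by linarith), sub_neg_eq_add, zero_add] at this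
    exact (le_abs_self _).trans (this.trans_eq (mul_comm _ _))
  have h_weighted : ∫ r in Icc (-s) 0, exp (γ * r) * ‖φ r‖ ^ 2
      ≤ ∫ r in Iic 0, exp (γ * r) * ‖φ r‖ ^ 2 :=
    setIntegral_mono_set hφ (ae_of_all _ fun r => by positivity) hsub.eventuallyLE
  calc ‖∫ r in Icc (-s) 0, φ r‖ ^ 2 ≤ (∫ r in Icc (-s) 0, ‖φ r‖) ^ 2 :=
        pow_le_pow_left₀ (norm_nonneg _) (norm_integral_le_integral_norm _) 2
    _ ≤ (∫ r in Icc (-s) 0, (exp (γ * r))⁻¹) * ∫ r in Icc (-s) 0, exp (γ * r) * ‖φ r‖ ^ 2 :=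
        sq_integral_norm_le_integral_inv_mul_integral_mul_norm_sq (fun r => exp_pos _)
          (by fun_prop) (hφm.mono_set hsub)
          ((Continuous.inv₀ (by fun_prop) fun r => (exp_pos _).ne').integrableOn_Icc)
          (hφ.mono_set hsub)
    _ ≤ _ := mul_le_mul h_inv h_weighted (setIntegral_nonneg measurableSet_Icc
          fun r _ => by positivity) (by positivity)

end IntegralOverIcc

theorem integrableOn_Ioi_mul_exp_neg_mul {a : ℝ} (ha : 0 < a) :
    IntegrableOn (fun t => t * exp (-(a * t))) (Ioi 0) := by
  refine (integrableOn_rpow_mul_exp_neg_mul_rpow (s := 1) (p := 1) (by norm_num) one_pos ha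
    ).congr_fun (fun t _ => ?_) measurableSet_Ioi
  simp [rpow_one, neg_mul]

theorem integral_Ioi_mul_exp_neg_mul {a : ℝ} (ha : 0 < a) :
    ∫ t in Ioi 0, t * exp (-(a * t)) = a⁻¹ ^ 2 := by
  have := integral_rpow_mul_exp_neg_mul_Ioi two_pos ha
  norm_num [Gamma_two] at this
  rwa [inv_pow]

theorem setIntegral_Ioi_one_mul_exp_neg_mul_le {a : ℝ} (ha : 0 < a) :
    ∫ t in Ioi 1, t * exp (-(a * t)) ≤ a⁻¹ ^ 2 :=
  (setIntegral_mono_set (integrableOn_Ioi_mul_exp_neg_mul ha)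
    (ae_restrict_of_forall_mem measurableSet_Ioi fun _ ht =>
      mul_nonneg (le_of_lt ht) (exp_pos _).le)
    (Ioi_subset_Ioi zero_le_one).eventuallyLE).trans_eq (integral_Ioi_mul_exp_neg_mul ha)

theorem integrableOn_and_setIntegral_le_of_le {α : Type*} [MeasurableSpace α] {ν : Measure α}
    {s : Set α} {g h : α → ℝ} (hs : MeasurableSet s) (hg : AEStronglyMeasurable g (ν.restrict s))
    (hh : IntegrableOn h s ν) (hg_nonneg : ∀ x ∈ s, 0 ≤ g x) (hgh : ∀ x ∈ s, g x ≤ h x) :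
    IntegrableOn g s ν ∧ ∫ x in s, g x ∂ν ≤ ∫ x in s, h x ∂ν := by
  have hg_int : IntegrableOn g s ν := hh.mono' hg <| ae_restrict_of_forall_mem hs fun x hx => by
    rw [norm_of_nonneg (hg_nonneg x hx)]
    exact hgh x hx
  exact ⟨hg_int, setIntegral_mono_on hg_int hh hs hgh⟩

theorem mul_mul_exp_le_of_exp_decay {δ γ a b s : ℝ} (hs : 0 ≤ s)
    (hab : a ≤ b * exp (-δ * (s - 1))) :
    a * (s * exp (γ * s)) ≤ b * exp δ * (s * exp (-((δ - γ) * s))) := by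
  have hexp : exp (-δ * (s - 1)) * exp (γ * s) = exp δ * exp (-((δ - γ) * s)) := by
    rw [← exp_add, ← exp_add]
    ring_nf
  calc a * (s * exp (γ * s)) ≤ b * exp (-δ * (s - 1)) * (s * exp (γ * s)) :=
        mul_le_mul_of_nonneg_right hab (by positivity)
    _ = b * exp δ * (s * exp (-((δ - γ) * s))) := by linear_combination (b * s) * hexp

theorem integrableOn_Ioi_mul_mul_exp_and_integral_le {δ γ : ℝ} {μ : ℝ → ℝ} (hγ : 0 ≤ γ)
    (hγδ : γ < δ) (hμ_nonneg : ∀ s > (0 : ℝ), 0 ≤ μ s) (hμ_int : IntegrableOn μ (Ioi 0))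
    (hμ_decay : ∀ s ≥ (1 : ℝ), μ s ≤ μ 1 * exp (-δ * (s - 1))) :
    IntegrableOn (fun s => μ s * (s * exp (γ * s))) (Ioi 0) ∧
      ∫ s in Ioi 0, μ s * (s * exp (γ * s)) ≤
        exp γ * (∫ s in Ioc 0 1, μ s) + μ 1 * exp δ * (δ - γ)⁻¹ ^ 2 := by
  have hmeas : AEStronglyMeasurable (fun s => μ s * (s * exp (γ * s))) (volume.restrict (Ioi 0)) :=
    hμ_int.aestronglyMeasurable.mul (by fun_prop : Continuous _).aestronglyMeasurable
  have hnonneg : ∀ s ∈ Ioi (0 : ℝ), 0 ≤ μ s * (s * exp (γ * s)) := fun s hs =>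
    mul_nonneg (hμ_nonneg s hs) (mul_nonneg (le_of_lt hs) (exp_pos _).le)
  have hpoint_near : ∀ s ∈ Ioc (0 : ℝ) 1, μ s * (s * exp (γ * s)) ≤ exp γ * μ s := fun s hs => by
    have : s * exp (γ * s) ≤ exp γ :=
      (mul_le_of_le_one_left (exp_pos _).le hs.2).trans
        (exp_le_exp.2 (mul_le_of_le_one_right hγ hs.2))
    rw [mul_comm (exp γ)]
    exact mul_le_mul_of_nonneg_left this (hμ_nonneg s hs.1)
  have htail := integrableOn_Ioi_mul_exp_neg_mul (sub_pos.2 hγδ)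
  obtain ⟨hint_near, hle_near⟩ := integrableOn_and_setIntegral_le_of_le measurableSet_Ioc
    (hmeas.mono_set Ioc_subset_Ioi_self) ((hμ_int.mono_set Ioc_subset_Ioi_self).const_mul _)
    (fun s hs => hnonneg s hs.1) hpoint_near
  obtain ⟨hint_far, hle_far⟩ := integrableOn_and_setIntegral_le_of_le measurableSet_Ioi
    (hmeas.mono_set (Ioi_subset_Ioi zero_le_one))
    ((htail.mono_set (Ioi_subset_Ioi zero_le_one)).const_mul _)
    (fun s hs => hnonneg s (mem_Ioi.2 (one_pos.trans hs)))
    (fun s hs => mul_mul_exp_le_of_exp_decay (zero_le_one.trans hs.le) (hμ_decay s hs.le))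
  rw [← Ioc_union_Ioi_eq_Ioi zero_le_one]
  refine ⟨hint_near.union hint_far, ?_⟩
  rw [setIntegral_union (Ioc_disjoint_Ioi le_rfl) measurableSet_Ioi hint_near hint_far]
  rw [integral_const_mul] at hle_near hle_far
  have htail_le := mul_le_mul_of_nonneg_left (setIntegral_Ioi_one_mul_exp_neg_mul_le
    (sub_pos.2 hγδ)) (mul_nonneg (hμ_nonneg 1 one_pos) (exp_pos δ).le)
  linarith

theorem stmt_5_general {V : Type*} [NormedAddCommGroup V] [InnerProductSpace ℝ V]
    (δ γ : ℝ) (hγ : 0 < γ) (hγδ : γ < δ)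
    (μ : ℝ → ℝ) (hμpos : ∀ s > (0:ℝ), 0 ≤ μ s)
    (hμint : IntegrableOn μ (Set.Ioi 0))
    (hμdecay : ∀ s ≥ (1:ℝ), μ s ≤ μ 1 * Real.exp (-δ * (s - 1)))
    (φ : ℝ → V) (hφmeas : AEStronglyMeasurable φ (volume.restrict (Set.Iic 0)))
    (hφ : IntegrableOn (fun s => Real.exp (γ * s) * ‖φ s‖ ^ 2) (Set.Iic 0))
    (J : (ℝ → V) → ℝ → V)
    (hJ : ∀ ψ s, J ψ s = ∫ r in Set.Icc (-s) 0, ψ r) :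
    IntegrableOn (fun s => μ s * ‖J φ s‖ ^ 2) (Set.Ioi 0) ∧
    ∫ s in Set.Ioi (0:ℝ), μ s * ‖J φ s‖ ^ 2 ≤
      (Real.exp γ * (∫ s in Set.Ioc (0:ℝ) 1, μ s) + μ 1 * Real.exp δ * (δ - γ)⁻¹ ^ 2) *
        ∫ s in Set.Iic (0:ℝ), Real.exp (γ * s) * ‖φ s‖ ^ 2 := by
  have hφ_loc : ∀ a, IntegrableOn φ (Icc a 0) := fun a =>
    integrable_of_integrable_mul_norm_sq (exp_pos (γ * a))
      (ae_restrict_of_forall_mem measurableSet_Icc fun r hr =>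
        exp_le_exp.2 (mul_le_mul_of_nonneg_left hr.1 hγ.le))
      (hφmeas.mono_set Icc_subset_Iic_self) (hφ.mono_set Icc_subset_Iic_self)
  obtain ⟨hweight_int, hweight_le⟩ :=
    integrableOn_Ioi_mul_mul_exp_and_integral_le hγ.le hγδ hμpos hμint hμdecay
  rw [show J φ = fun s => ∫ r in Icc (-s) 0, φ r from funext (hJ φ)]
  obtain ⟨hint, hle⟩ := integrableOn_and_setIntegral_le_of_le measurableSet_Ioi
    (hμint.aestronglyMeasurable.mul
      ((continuous_setIntegral_Icc_neg hφ_loc).norm.pow 2).aestronglyMeasurable)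
    (hweight_int.mul_const (∫ r in Iic 0, exp (γ * r) * ‖φ r‖ ^ 2))
    (fun s hs => mul_nonneg (hμpos s hs) (sq_nonneg _))
    (fun s hs => (mul_le_mul_of_nonneg_left
      (norm_setIntegral_Icc_neg_sq_le hγ.le (le_of_lt hs) hφmeas hφ) (hμpos s hs)).trans_eq
      (by ring))
  refine ⟨hint, hle.trans ?_⟩
  rw [integral_mul_const]
  exact mul_le_mul_of_nonneg_right hweight_le
    (setIntegral_nonneg measurableSet_Iic fun _ _ => by positivity)

theorem stmt_5 {V : Type*} [NormedAddCommGroup V] [InnerProductSpace ℝ V]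
    [CompleteSpace V]
    (δ γ : ℝ) (hγ : 0 < γ) (hγδ : γ < δ)
    (μ : ℝ → ℝ) (hμpos : ∀ s > (0:ℝ), 0 ≤ μ s)
    (hμcont : ContinuousOn μ (Set.Ioi 0))
    (hμint : IntegrableOn μ (Set.Ioi 0))
    (hμdecay : ∀ s ≥ (1:ℝ), μ s ≤ μ 1 * Real.exp (-δ * (s - 1)))
    (φ : ℝ → V) (hφmeas : AEStronglyMeasurable φ (volume.restrict (Set.Iic 0)))
    (hφ : IntegrableOn (fun s => Real.exp (γ * s) * ‖φ s‖ ^ 2) (Set.Iic 0))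
    (J : (ℝ → V) → ℝ → V)
    (hJ : ∀ ψ s, J ψ s = ∫ r in Set.Icc (-s) 0, ψ r) :
    IntegrableOn (fun s => μ s * ‖J φ s‖ ^ 2) (Set.Ioi 0) ∧
    ∫ s in Set.Ioi (0:ℝ), μ s * ‖J φ s‖ ^ 2 ≤
      (Real.exp γ * (∫ s in Set.Ioc (0:ℝ) 1, μ s) + μ 1 * Real.exp δ * (δ - γ)⁻¹ ^ 2) *
        ∫ s in Set.Iic (0:ℝ), Real.exp (γ * s) * ‖φ s‖ ^ 2 :=
  stmt_5_general δ γ hγ hγδ μ hμpos hμint hμdecay φ hφmeas hφ J hJ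
end

section
/- Let δ > γ > 0 and μ : (0,∞) → [0,∞) satisfy μ(s) ≤ μ(t)e^{-δ(s-t)} for 0 < t < s, with k(t) = ∫_t^∞ μ(s)ds ≤ M₁ for all t ≥ 0. Then for every t > 0 and every φ with ‖φ‖²_{L²_V} = ∫_{-∞}^0 e^{γs}‖φ(s)‖² ds < ∞, one has ∫_{-∞}^0 k(t-s)‖φ(s)‖ ds ≤ M₁^{1/2} μ(t)^{1/2} ‖φ‖_{L²_V} / (δ^{1/2}(δ-γ)^{1/2}). -/
/-!
Write `k(t-s)‖φ s‖ = k(t-s) e^{-γs/2} · e^{γs/2} ‖φ s‖` and apply Cauchy–Schwarz: the decay of `μ`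
gives `k(t-s) ≤ μ(t) e^{δs} / δ` for `s ≤ 0`, so the first factor has square integral at most
`μ(t) / (δ (δ - γ))`, while `k ≤ M₁` bounds the second by `M₁ ‖φ‖²`. Cauchy–Schwarz is used in
the form `xy ≤ (εx² + y²/ε)/2` integrated and then optimised over `ε`, which needs no
measurability of the integrand.
-/

open Real MeasureTheory Set Filter Topology

lemma le_sqrt_mul_sqrt_of_forall_le {X A B : ℝ} (h : ∀ ε > 0, X ≤ (ε * A + B / ε) / 2) :
    X ≤ √A * √B := by
  -- `ε = (√B + η) / (√A + η)` balances the two terms; `η > 0` copes with `A ≤ 0` or `B ≤ 0`.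
  have hη : ∀ η > 0, X ≤ (√A + η) * (√B + η) := by
    intro η hη
    have hA : A ≤ (√A + η) ^ 2 := (le_max_left A 0).trans <| by
      rw [← sq_sqrt']; gcongr; linarith
    have hB : B ≤ (√B + η) ^ 2 := (le_max_left B 0).trans <| by
      rw [← sq_sqrt']; gcongr; linarith
    have hε : 0 < (√B + η) / (√A + η) := by positivity
    calc X ≤ ((√B + η) / (√A + η) * A + B / ((√B + η) / (√A + η))) / 2 := h _ hε
      _ ≤ ((√B + η) / (√A + η) * (√A + η) ^ 2 + (√B + η) ^ 2 / ((√B + η) / (√A + η))) / 2 := by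
        gcongr
      _ = (√A + η) * (√B + η) := by
        have : 0 < √A + η := by positivity
        have : 0 < √B + η := by positivity
        field_simp; ring
  have hlim : Tendsto (fun η => (√A + η) * (√B + η)) (𝓝[>] 0) (𝓝 (√A * √B)) := by
    have : Continuous fun η : ℝ => (√A + η) * (√B + η) := by fun_prop
    simpa using (this.tendsto 0).mono_left nhdsWithin_le_nhds
  exact ge_of_tendsto hlim (eventually_nhdsWithin_of_forall hη)

lemma integral_mul_le_sqrt_mul_sqrt_of_le {α : Type*} [MeasurableSpace α] {ν : Measure α}
    {K f w P : α → ℝ} {M : ℝ} (hK : ∀ᵐ x ∂ν, 0 ≤ K x) (hf : ∀ᵐ x ∂ν, 0 ≤ f x)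
    (hw : ∀ᵐ x ∂ν, 0 < w x) (hKM : ∀ᵐ x ∂ν, K x ≤ M) (hKP : ∀ᵐ x ∂ν, K x ≤ P x * w x)
    (hP : Integrable P ν) (hwf : Integrable (fun x => w x * f x ^ 2) ν) :
    ∫ x, K x * f x ∂ν ≤ √(∫ x, P x ∂ν) * √(M * ∫ x, w x * f x ^ 2 ∂ν) := by
  refine le_sqrt_mul_sqrt_of_forall_le fun ε hε => ?_
  have hpt : ∀ᵐ x ∂ν, K x * f x ≤ (ε * P x + M * (w x * f x ^ 2) / ε) / 2 := by
    filter_upwards [hK, hf, hw, hKM, hKP] with x hK hf hw hKM hKP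
    have amgm : K x * f x ≤ (ε * (K x / w x) + K x * (w x * f x ^ 2) / ε) / 2 := by
      have hgap : (ε * (K x / w x) + K x * (w x * f x ^ 2) / ε) / 2 - K x * f x
          = K x * (w x * f x - ε) ^ 2 / (2 * ε * w x) := by
        field_simp; ring
      have : 0 ≤ K x * (w x * f x - ε) ^ 2 / (2 * ε * w x) := by positivity
      linarith
    refine amgm.trans ?_
    gcongr
    rwa [div_le_iff₀ hw]
  calc ∫ x, K x * f x ∂ν ≤ ∫ x, (ε * P x + M * (w x * f x ^ 2) / ε) / 2 ∂ν :=
        integral_mono_of_nonneg (by filter_upwards [hK, hf] with x hK hf; positivity)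
          (((hP.const_mul ε).add ((hwf.const_mul M).div_const ε)).div_const 2) hpt
    _ = (ε * ∫ x, P x ∂ν + (M * ∫ x, w x * f x ^ 2 ∂ν) / ε) / 2 := by
        rw [integral_div, integral_add (hP.const_mul ε) ((hwf.const_mul M).div_const ε),
          integral_const_mul, integral_div, integral_const_mul]

lemma setIntegral_Ioi_le_of_le_exp {μ : ℝ → ℝ} {δ t a : ℝ} (hδ : 0 < δ)
    (hμ : ∀ s > a, 0 ≤ μ s) (hdecay : ∀ s > a, μ s ≤ μ t * exp (-δ * (s - t))) :
    ∫ s in Ioi a, μ s ≤ μ t * exp (-δ * (a - t)) / δ := by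
  have hexp : ∀ s, μ t * exp (-δ * (s - t)) = μ t * exp (δ * t) * exp (-δ * s) := fun s => by
    rw [mul_assoc, ← exp_add]; ring_nf
  calc ∫ s in Ioi a, μ s ≤ ∫ s in Ioi a, μ t * exp (-δ * (s - t)) :=
        integral_mono_of_nonneg (ae_restrict_of_forall_mem measurableSet_Ioi hμ)
          (by simp_rw [hexp]; exact (integrableOn_exp_mul_Ioi (neg_neg_of_pos hδ) a).const_mul _)
          (ae_restrict_of_forall_mem measurableSet_Ioi hdecay)
    _ = μ t * exp (-δ * (a - t)) / δ := by
        simp_rw [hexp]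
        rw [integral_const_mul, integral_exp_mul_Ioi (neg_neg_of_pos hδ)]
        field_simp

theorem stmt_15_general {V : Type*} [NormedAddCommGroup V] [NormedSpace ℝ V]
    (δ γ M₁ : ℝ) (hγ : 0 < γ) (hγδ : γ < δ)
    (μ : ℝ → ℝ) (hμpos : ∀ s > (0:ℝ), 0 ≤ μ s)
    (hμdecay : ∀ t s : ℝ, 0 < t → t < s → μ s ≤ μ t * Real.exp (-δ * (s - t)))
    (k : ℝ → ℝ) (hk : ∀ t, k t = ∫ s in Set.Ioi t, μ s)
    (hkbdd : ∀ t ≥ (0:ℝ), k t ≤ M₁)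
    (φ : ℝ → V)
    (hφ : IntegrableOn (fun s => Real.exp (γ * s) * ‖φ s‖ ^ 2) (Set.Iic 0)) :
    ∀ t > (0:ℝ),
      ∫ s in Set.Iic (0:ℝ), k (t - s) * ‖φ s‖ ≤
        Real.sqrt M₁ * Real.sqrt (μ t) *
          Real.sqrt (∫ s in Set.Iic (0:ℝ), Real.exp (γ * s) * ‖φ s‖ ^ 2) /
            (Real.sqrt δ * Real.sqrt (δ - γ)) := by
  intro t ht
  have hδ : 0 < δ := hγ.trans hγδ
  have hδγ : 0 < δ - γ := sub_pos.2 hγδ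
  have hk_nonneg : ∀ s ∈ Iic (0 : ℝ), 0 ≤ k (t - s) := fun s hs => (hk _).symm ▸
    setIntegral_nonneg measurableSet_Ioi fun r hr =>
      hμpos r (by linarith [mem_Iic.1 hs, mem_Ioi.1 hr])
  have hk_le : ∀ s ∈ Iic (0 : ℝ), k (t - s) ≤ μ t / δ * exp ((δ - γ) * s) * exp (γ * s) := by
    intro s hs
    have hts : t ≤ t - s := by linarith [mem_Iic.1 hs]
    rw [hk, mul_assoc, ← exp_add, div_mul_eq_mul_div]
    convert setIntegral_Ioi_le_of_le_exp (a := t - s) hδ (fun r hr => hμpos r (by linarith))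
      (fun r hr => hμdecay t r ht (by linarith)) using 4
    ring
  have hCS := integral_mul_le_sqrt_mul_sqrt_of_le (M := M₁)
    (P := fun s => μ t / δ * exp ((δ - γ) * s))
    (ae_restrict_of_forall_mem measurableSet_Iic hk_nonneg) (ae_of_all _ fun s => norm_nonneg (φ s))
    (ae_of_all _ fun s => exp_pos (γ * s))
    (ae_restrict_of_forall_mem measurableSet_Iic fun s hs => hkbdd _ (by linarith [mem_Iic.1 hs]))
    (ae_restrict_of_forall_mem measurableSet_Iic hk_le)
    ((integrableOn_exp_mul_Iic hδγ 0).const_mul _) hφ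
  rw [integral_const_mul, integral_exp_mul_Iic hδγ, mul_zero, exp_zero] at hCS
  refine hCS.trans_eq ?_
  rw [div_mul_div_comm, mul_one, sqrt_div' _ (by positivity), sqrt_mul hδ.le,
    sqrt_mul' _ (setIntegral_nonneg measurableSet_Iic fun s _ => by positivity)]
  ring

theorem stmt_15 {V : Type*} [NormedAddCommGroup V] [NormedSpace ℝ V]
    (δ γ M₁ : ℝ) (hγ : 0 < γ) (hγδ : γ < δ)
    (μ : ℝ → ℝ) (hμpos : ∀ s > (0:ℝ), 0 ≤ μ s)
    (hμdecay : ∀ t s : ℝ, 0 < t → t < s → μ s ≤ μ t * Real.exp (-δ * (s - t)))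
    (hμint : IntegrableOn μ (Set.Ioi 0))
    (k : ℝ → ℝ) (hk : ∀ t, k t = ∫ s in Set.Ioi t, μ s)
    (hkbdd : ∀ t ≥ (0:ℝ), k t ≤ M₁)
    (φ : ℝ → V) (hφmeas : AEStronglyMeasurable φ (volume.restrict (Set.Iic 0)))
    (hφ : IntegrableOn (fun s => Real.exp (γ * s) * ‖φ s‖ ^ 2) (Set.Iic 0)) :
    ∀ t > (0:ℝ),
      ∫ s in Set.Iic (0:ℝ), k (t - s) * ‖φ s‖ ≤
        Real.sqrt M₁ * Real.sqrt (μ t) *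
          Real.sqrt (∫ s in Set.Iic (0:ℝ), Real.exp (γ * s) * ‖φ s‖ ^ 2) /
            (Real.sqrt δ * Real.sqrt (δ - γ)) :=
  stmt_15_general δ γ M₁ hγ hγδ μ hμpos hμdecay k hk hkbdd φ hφ
end

section
/- Let a : ℝ → ℝ be locally Lipschitz with Lipschitz constant L on [-R,R] and a(r) ≥ m > 0, l a bounded linear functional on L²(Ω) with norm |l|. Then for u, v ∈ H¹₀(Ω) with |l(u)|, |l(v)| ≤ R and any α > 0: -2∫_Ω (a(l(u))∇u - a(l(v))∇v)·∇(u-v) dx ≤ (α - 2m)‖u-v‖² + (L²|l|²/α)|u-v|²‖v‖², where ‖·‖ is the H¹₀ seminorm and |·| the L² norm. -/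
/-!
Write `A = a(l(e u))`, `B = a(l(e v))`. Since `⟪u, u - v⟫ = ‖u - v‖² + ⟪v, u - v⟫`, the left side is
`-2A‖u - v‖² - 2(A - B)⟪v, u - v⟫`. The first term is at most `-2m‖u - v‖²` because `a ≥ m`; the
second is at most `2|A - B|‖v‖‖u - v‖`, where `|A - B| ≤ |L|‖l‖‖e (u - v)‖` by the Lipschitz bound,
and Young's inequality `2xy ≤ αx² + y²/α` splits it into the two remaining terms.
-/

open scoped RealInnerProductSpace

lemma abs_sub_comp_le_of_lipschitzOn {E : Type*} [SeminormedAddCommGroup E] [NormedSpace ℝ E]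
    {a : ℝ → ℝ} {s : Set ℝ} {L : ℝ} (hLip : ∀ x ∈ s, ∀ y ∈ s, |a x - a y| ≤ L * |x - y|)
    (l : E →L[ℝ] ℝ) {x y : E} (hx : l x ∈ s) (hy : l y ∈ s) :
    |a (l x) - a (l y)| ≤ |L| * (‖l‖ * ‖x - y‖) :=
  calc |a (l x) - a (l y)| ≤ L * |l x - l y| := hLip _ hx _ hy
    _ ≤ |L| * |l (x - y)| := by
      rw [map_sub]; exact mul_le_mul_of_nonneg_right (le_abs_self L) (abs_nonneg _)
    _ ≤ |L| * (‖l‖ * ‖x - y‖) := mul_le_mul_of_nonneg_left (l.le_opNorm _) (abs_nonneg L)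

lemma neg_two_mul_sub_inner_le {V : Type*} [NormedAddCommGroup V] [InnerProductSpace ℝ V]
    {m A B δ α : ℝ} (hA : m ≤ A) (hAB : |A - B| ≤ δ) (hα : 0 < α) (u v : V) :
    -2 * (A * ⟪u, u - v⟫ - B * ⟪v, u - v⟫) ≤
      (α - 2 * m) * ‖u - v‖ ^ 2 + α⁻¹ * (δ * ‖v‖) ^ 2 := by
  have hsplit : ⟪u, u - v⟫ = ‖u - v‖ ^ 2 + ⟪v, u - v⟫ := by
    rw [← real_inner_self_eq_norm_sq, ← inner_add_left, sub_add_cancel]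
  have hcross : -((A - B) * ⟪v, u - v⟫) ≤ ‖u - v‖ * (δ * ‖v‖) :=
    calc -((A - B) * ⟪v, u - v⟫) ≤ |A - B| * |⟪v, u - v⟫| := by
          rw [← abs_mul]; exact neg_le_abs _
      _ ≤ δ * (‖v‖ * ‖u - v‖) :=
          mul_le_mul hAB (abs_real_inner_le_norm v (u - v)) (abs_nonneg _)
            ((abs_nonneg _).trans hAB)
      _ = ‖u - v‖ * (δ * ‖v‖) := by ring
  have hyoung := two_mul_le_add_mul_sq (a := ‖u - v‖) (b := δ * ‖v‖) hα
  have hcoercive : m * ‖u - v‖ ^ 2 ≤ A * ‖u - v‖ ^ 2 :=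
    mul_le_mul_of_nonneg_right hA (sq_nonneg _)
  rw [hsplit]
  linarith

theorem stmt_19_general {V H : Type*} [NormedAddCommGroup V] [InnerProductSpace ℝ V]
    [NormedAddCommGroup H] [InnerProductSpace ℝ H]
    (m L R α : ℝ) (hα : 0 < α)
    (a : ℝ → ℝ) (ha : ∀ r, m ≤ a r)
    (hLip : ∀ x ∈ Set.Icc (-R) R, ∀ y ∈ Set.Icc (-R) R, |a x - a y| ≤ L * |x - y|)
    (e : V →ₗ[ℝ] H) (l : H →L[ℝ] ℝ)
    (u v : V) (hu : |l (e u)| ≤ R) (hv : |l (e v)| ≤ R) :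
    -2 * (a (l (e u)) * (inner ℝ u (u - v) : ℝ) - a (l (e v)) * (inner ℝ v (u - v) : ℝ)) ≤
      (α - 2 * m) * ‖u - v‖ ^ 2 + (L ^ 2 * ‖l‖ ^ 2 / α) * ‖e (u - v)‖ ^ 2 * ‖v‖ ^ 2 := by
  have hdiff : |a (l (e u)) - a (l (e v))| ≤ |L| * (‖l‖ * ‖e (u - v)‖) := by
    rw [map_sub]
    exact abs_sub_comp_le_of_lipschitzOn hLip l (abs_le.mp hu) (abs_le.mp hv)
  convert neg_two_mul_sub_inner_le (ha _) hdiff hα u v using 2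
  rw [div_eq_inv_mul, mul_pow, mul_pow, sq_abs]
  ring

theorem stmt_19 {V H : Type*} [NormedAddCommGroup V] [InnerProductSpace ℝ V]
    [NormedAddCommGroup H] [InnerProductSpace ℝ H]
    (m L R α : ℝ) (hm : 0 < m) (hR : 0 < R) (hα : 0 < α)
    (a : ℝ → ℝ) (ha : ∀ r, m ≤ a r)
    (hLip : ∀ x ∈ Set.Icc (-R) R, ∀ y ∈ Set.Icc (-R) R, |a x - a y| ≤ L * |x - y|)
    (e : V →ₗ[ℝ] H) (l : H →L[ℝ] ℝ)
    (u v : V) (hu : |l (e u)| ≤ R) (hv : |l (e v)| ≤ R) :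
    -2 * (a (l (e u)) * (inner ℝ u (u - v) : ℝ) - a (l (e v)) * (inner ℝ v (u - v) : ℝ)) ≤
      (α - 2 * m) * ‖u - v‖ ^ 2 + (L ^ 2 * ‖l‖ ^ 2 / α) * ‖e (u - v)‖ ^ 2 * ‖v‖ ^ 2 :=
  stmt_19_general m L R α hα a ha hLip e l u v hu hv
end
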